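/- Let G be a non-abelian, irreducible subgroup of PL_o([0,∞[) such that every element of the image of ρ : G → Aff_o(ℝ) is a translation, and let τ_r : G → ℝ send g to the amplitude of the translation ρ(g). If the character χ_ℓ = ln∘σ_ℓ is non-zero then [χ_ℓ] ∉ Σ¹(G); similarly, if τ_r is non-zero then [−τ_r] ∉ Σ¹(G). -/

import Mathlib

open Set

/-- A map `g : ℝ → ℝ` is *finitary piecewise linear* if there is a finite set of
breakpoints outside of which `g` is locally affine. -/
def IsFinitaryPL (g : ℝ → ℝ) : Prop :=
  ∃ B : Finset ℝ, ∀ t : ℝ, t ∉ B →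
    ∃ m b : ℝ, ∃ ε : ℝ, 0 < ε ∧ ∀ u : ℝ, |u - t| < ε → g u = m * u + b

/-- The support of a map of the real line. -/
def suppOf (g : ℝ → ℝ) : Set ℝ := {t : ℝ | g t ≠ t}

/-- `PLo I` is the set of orientation-preserving (i.e. strictly increasing) finitary
piecewise linear homeomorphisms of `ℝ` with support contained in `I`. -/
def PLo (I : Set ℝ) : Set (Equiv.Perm ℝ) :=
  {g : Equiv.Perm ℝ | StrictMono ⇑g ∧ IsFinitaryPL ⇑g ∧ suppOf ⇑g ⊆ I}

/-- The right derivative of `g` at `a`. -/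
noncomputable def rightSlope (g : ℝ → ℝ) (a : ℝ) : ℝ := derivWithin g (Ici a) a

/-- The left derivative of `g` at `c`. -/
noncomputable def leftSlope (g : ℝ → ℝ) (c : ℝ) : ℝ := derivWithin g (Iic c) c

/-- The amplitude of the translation with which `g` coincides near `+∞`. -/
noncomputable def amplTop (g : ℝ → ℝ) : ℝ :=
  Filter.limUnder Filter.atTop (fun t => g t - t)

/-- The amplitude of the translation with which `g` coincides near `-∞`. -/
noncomputable def amplBot (g : ℝ → ℝ) : ℝ :=
  Filter.limUnder Filter.atBot (fun t => g t - t)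

/-- A character of a group is a homomorphism into `(ℝ, +)`. -/
def IsChar {Γ : Type*} [Group Γ] (χ : Γ → ℝ) : Prop :=
  ∀ g h : Γ, χ (g * h) = χ g + χ h

/-- Two characters lie on the same ray: `ψ` is a positive multiple of `χ`. -/
def SameRayChar {Γ : Type*} (χ ψ : Γ → ℝ) : Prop :=
  ∃ r : ℝ, 0 < r ∧ ∀ g : Γ, ψ g = r * χ g

/-- The subgraph `Γ(G, X)_χ` of the Cayley graph of `G` with respect to the generating
set `X`, spanned by the vertices `g` with `χ g ≥ 0`, is connected. -/
def CayleyConnected {Γ : Type*} [Group Γ] (X : Set Γ) (χ : Γ → ℝ) : Prop :=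
  ∀ g h : Γ, 0 ≤ χ g → 0 ≤ χ h →
    Relation.ReflTransGen
      (fun u v : Γ => 0 ≤ χ u ∧ 0 ≤ χ v ∧ ∃ x ∈ X, v = u * x ∨ u = v * x) g h

/-- `[χ] ∈ Σ¹(G)`: for every generating set `X` of `G` the subgraph `Γ(G,X)_χ`
of the Cayley graph is connected. -/
def MemSigma1 {Γ : Type*} [Group Γ] (χ : Γ → ℝ) : Prop :=
  ∀ X : Set Γ, Subgroup.closure X = ⊤ → CayleyConnected X χ

/-- The character `χ_ℓ = ln ∘ σ_ℓ` of a subgroup `G` of `PL_o([a,c])`. -/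
noncomputable def chiL (G : Subgroup (Equiv.Perm ℝ)) (a : ℝ) : G → ℝ :=
  fun g => Real.log (rightSlope (⇑(g : Equiv.Perm ℝ)) a)

/-- The character `χ_r = ln ∘ σ_r` of a subgroup `G` of `PL_o([a,c])`. -/
noncomputable def chiR (G : Subgroup (Equiv.Perm ℝ)) (c : ℝ) : G → ℝ :=
  fun g => Real.log (leftSlope (⇑(g : Equiv.Perm ℝ)) c)

/-!
In a suitable coordinate `u` (`u = -log t` near the end `0`, `u = t` near `+∞`) every element `g`
of `G` acts for large `u` as the translation by `-ψ g`, where `ψ = χ_ℓ`, resp. `ψ = -τ_r`.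
Pick `a` with `ψ a > 0`, acting as such a translation beyond `Θ`. The elements `x` acting as the
translation by `-ψ x` on the whole half-line `[Θ + ψ x, ∞[` generate `G` (multiply by a large
power of `a`), and this property is preserved along the edges of the Cayley graph that stay in
`ψ ≥ 0`. But, by irreducibility, a conjugate of a non-trivial commutator has `ψ = 0` and moves a
point beyond `Θ`, so it is not connected to `1` in `Γ(G, X)_ψ`.
-/

open Filter Topology Equiv
open scoped commutatorElement

namespace IsChar

variable {Γ : Type*} [Group Γ] {ψ : Γ → ℝ}

def toMonoidHom (hψ : IsChar ψ) : Γ →* Multiplicative ℝ where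
  toFun g := Multiplicative.ofAdd (ψ g)
  map_one' := by simpa using hψ 1 1
  map_mul' g h := hψ g h

theorem map_one (hψ : IsChar ψ) : ψ 1 = 0 :=
  congrArg Multiplicative.toAdd (hψ.toMonoidHom.map_one)

theorem map_inv (hψ : IsChar ψ) (g : Γ) : ψ g⁻¹ = -ψ g :=
  congrArg Multiplicative.toAdd (hψ.toMonoidHom.map_inv g)

theorem map_pow (hψ : IsChar ψ) (g : Γ) (n : ℕ) : ψ (g ^ n) = n * ψ g := by
  rw [← nsmul_eq_mul]
  exact congrArg Multiplicative.toAdd (hψ.toMonoidHom.map_pow g n)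

theorem map_eq_zero_of_mem_commutator (hψ : IsChar ψ) {g : Γ} (hg : g ∈ commutator Γ) :
    ψ g = 0 :=
  congrArg Multiplicative.toAdd (Abelianization.commutator_subset_ker hψ.toMonoidHom hg)

theorem exists_pos (hψ : IsChar ψ) (h : ∃ g, ψ g ≠ 0) : ∃ g, 0 < ψ g := by
  obtain ⟨g, hg⟩ := h
  rcases hg.lt_or_gt with hneg | hpos
  · exact ⟨g⁻¹, by rw [hψ.map_inv]; linarith⟩
  · exact ⟨g, hpos⟩

end IsChar

theorem CayleyConnected.forall_of_iff {Γ : Type*} [Group Γ] {X : Set Γ} {χ : Γ → ℝ}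
    (hX : CayleyConnected X χ) {P : Γ → Prop} {g : Γ} (hg : 0 ≤ χ g) (hPg : P g)
    (hstep : ∀ v x, x ∈ X → 0 ≤ χ v → 0 ≤ χ (v * x) → (P v ↔ P (v * x)))
    {h : Γ} (hh : 0 ≤ χ h) : P h := by
  have hgh := hX g h hg hh
  clear hh
  induction hgh with
  | refl => exact hPg
  | tail _ hvw ih =>
    obtain ⟨hv, hw, x, hx, rfl | rfl⟩ := hvw
    · exact (hstep _ x hx hv hw).mp ih
    · exact (hstep _ x hx hw hv).mpr ih

section TailTranslations

variable {Γ : Type*} [Group Γ] (f : Γ →* Function.End ℝ) (ψ : Γ → ℝ)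

/-- Such an `x` maps `[Θ + ψ x, ∞)` onto `[Θ, ∞)`. -/
def tailTranslations (Θ : ℝ) : Set Γ :=
  {x | ∀ u, Θ + ψ x ≤ u → f x u = u - ψ x}

variable {f ψ} {Θ : ℝ}

theorem tailTranslations_mono {Θ' : ℝ} (hΘ : Θ ≤ Θ') :
    tailTranslations f ψ Θ ⊆ tailTranslations f ψ Θ' :=
  fun _ hx u hu => hx u (by linarith)

theorem one_mem_tailTranslations (hψ : IsChar ψ) : 1 ∈ tailTranslations f ψ Θ := by
  intro u _
  rw [hψ.map_one, map_one, sub_zero]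
  rfl

theorem mul_mem_tailTranslations (hψ : IsChar ψ) {x y : Γ} (hx : x ∈ tailTranslations f ψ Θ)
    (hy : y ∈ tailTranslations f ψ (Θ + ψ x)) : x * y ∈ tailTranslations f ψ Θ := by
  intro u hu
  rw [hψ] at hu ⊢
  rw [map_mul]
  show f x (f y u) = _
  rw [hy u (by linarith), hx _ (by linarith)]
  ring

theorem inv_mem_tailTranslations (hψ : IsChar ψ) {x : Γ} (hx : x ∈ tailTranslations f ψ Θ) :
    x⁻¹ ∈ tailTranslations f ψ (Θ + ψ x) := by
  intro u hu
  rw [hψ.map_inv] at hu ⊢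
  have hxu : f x (u + ψ x) = u := by rw [hx _ (by linarith)]; ring
  calc f x⁻¹ u = f (x⁻¹ * x) (u + ψ x) := by
        rw [map_mul]; exact congrArg (f x⁻¹) hxu.symm
    _ = u - -ψ x := by rw [inv_mul_cancel, map_one, sub_neg_eq_add]; rfl

theorem pow_mem_tailTranslations (hψ : IsChar ψ) {a : Γ} (ha : a ∈ tailTranslations f ψ Θ)
    (ha0 : 0 ≤ ψ a) (n : ℕ) : a ^ n ∈ tailTranslations f ψ Θ := by
  induction n with
  | zero => exact pow_zero a ▸ one_mem_tailTranslations hψ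
  | succ n ih =>
    rw [pow_succ]
    refine mul_mem_tailTranslations hψ ih (tailTranslations_mono ?_ ha)
    rw [hψ.map_pow]
    have : (0 : ℝ) ≤ n * ψ a := by positivity
    linarith

theorem mem_tailTranslations_iff_mul_mem (hψ : IsChar ψ) {v x : Γ}
    (hx : x ∈ tailTranslations f ψ Θ) (hv : 0 ≤ ψ v) :
    v ∈ tailTranslations f ψ Θ ↔ v * x ∈ tailTranslations f ψ Θ := by
  constructor
  · exact fun h => mul_mem_tailTranslations hψ h (tailTranslations_mono (by linarith) hx)
  · intro h
    have hxinv := inv_mem_tailTranslations hψ hx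
    have hψvx := hψ v x
    simpa using mul_mem_tailTranslations hψ h (tailTranslations_mono (by linarith) hxinv)

theorem closure_tailTranslations_eq_top (hψ : IsChar ψ)
    (htail : ∀ g, ∃ k, ∀ u, k ≤ u → f g u = u - ψ g) {a : Γ} (ha : 0 < ψ a)
    (haT : a ∈ tailTranslations f ψ Θ) : Subgroup.closure (tailTranslations f ψ Θ) = ⊤ := by
  rw [Subgroup.eq_top_iff']
  intro p
  obtain ⟨k, hk⟩ := htail p
  have hp : p ∈ tailTranslations f ψ (k - ψ p) := fun u hu => hk u (by linarith)
  obtain ⟨n, hn⟩ := exists_nat_gt ((k - ψ p - Θ) / ψ a)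
  rw [div_lt_iff₀ ha] at hn
  have hanp : a ^ n * p ∈ tailTranslations f ψ Θ := by
    refine mul_mem_tailTranslations hψ (pow_mem_tailTranslations hψ haT ha.le n)
      (tailTranslations_mono ?_ hp)
    rw [hψ.map_pow]
    linarith
  have hcl := mul_mem (inv_mem (pow_mem (Subgroup.subset_closure haT) n))
    (Subgroup.subset_closure hanp)
  rwa [inv_mul_cancel_left] at hcl

theorem not_memSigma1_of_eventually_translation (hψ : IsChar ψ) (hψ0 : ∃ g, ψ g ≠ 0)
    (htail : ∀ g, ∃ k, ∀ u, k ≤ u → f g u = u - ψ g)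
    (hmove : ∀ Θ, ∃ h, ψ h = 0 ∧ ∃ u, Θ ≤ u ∧ f h u ≠ u) : ¬ MemSigma1 ψ := by
  intro hσ
  obtain ⟨a, ha⟩ := hψ.exists_pos hψ0
  obtain ⟨k, hk⟩ := htail a
  have haT : a ∈ tailTranslations f ψ k := fun u hu => hk u (by linarith)
  have hconn := hσ _ (closure_tailTranslations_eq_top hψ htail ha haT)
  obtain ⟨h, hh, u, hu, hmoved⟩ := hmove k
  have hhT : h ∈ tailTranslations f ψ k :=
    hconn.forall_of_iff (hψ.map_one.ge) (one_mem_tailTranslations hψ)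
      (fun _ _ hx hv _ => mem_tailTranslations_iff_mul_mem hψ hx hv) hh.ge
  exact hmoved (by simpa [hh] using hhT u (by linarith))

end TailTranslations

theorem exists_affine_of_locally_affine {f : ℝ → ℝ} {s : Set ℝ} (hs : IsOpen s)
    (hs' : IsPreconnected s) (hloc : ∀ t ∈ s, ∃ m b : ℝ, ∀ᶠ u in 𝓝 t, f u = m * u + b) :
    ∃ m b : ℝ, ∀ t ∈ s, f t = m * t + b := by
  rcases s.eq_empty_or_nonempty with rfl | ⟨t₀, ht₀⟩
  · exact ⟨0, 0, fun t ht => ht.elim⟩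
  have hderiv : ∀ t ∈ s, ∃ m : ℝ, ∀ᶠ u in 𝓝 t, HasDerivAt f m u := by
    intro t ht
    obtain ⟨m, b, hmb⟩ := hloc t ht
    refine ⟨m, hmb.eventually_nhds.mono fun u hu => ?_⟩
    have hlin : HasDerivAt (fun u => m * u + b) m u := by
      simpa using ((hasDerivAt_id u).const_mul m).add_const b
    exact hlin.congr_of_eventuallyEq hu
  have hdiff : DifferentiableOn ℝ f s := fun t ht =>
    let ⟨_, hm⟩ := hderiv t ht; hm.self_of_nhds.differentiableAt.differentiableWithinAt
  have hderiv_const : ∀ t ∈ s, deriv f t = deriv f t₀ := by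
    refine fun t ht => hs.is_const_of_deriv_eq_zero hs' (fun u hu => ?_) (fun u hu => ?_) ht ht₀
    all_goals
      obtain ⟨m, hm⟩ := hderiv u hu
      have hloc_const : deriv f =ᶠ[𝓝 u] fun _ => m := hm.mono fun v hv => hv.deriv
    · exact ((hasDerivAt_const u m).congr_of_eventuallyEq hloc_const).differentiableAt
        |>.differentiableWithinAt
    · simpa using ((hasDerivAt_const u m).congr_of_eventuallyEq hloc_const).deriv
  refine ⟨deriv f t₀, f t₀ - deriv f t₀ * t₀, fun t ht => ?_⟩
  have hconst := hs.is_const_of_deriv_eq_zero (f := fun u => f u - deriv f t₀ * u) hs'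
    (hdiff.sub (differentiableOn_id.const_mul _)) (fun u hu => ?_) ht ht₀
  · linarith
  · have hd : HasDerivAt (fun u => f u - deriv f t₀ * u) (deriv f u - deriv f t₀) u := by
      simpa using (hdiff.differentiableAt (hs.mem_nhds hu)).hasDerivAt.fun_sub
        ((hasDerivAt_id u).const_mul (deriv f t₀))
    rw [hd.deriv, hderiv_const u hu, sub_self, Pi.zero_apply]

theorem IsFinitaryPL.exists_affine_Ioo {g : ℝ → ℝ} (hg : IsFinitaryPL g) (a : ℝ) :
    ∃ c, a < c ∧ ∃ m b : ℝ, ∀ t ∈ Ioo a c, g t = m * t + b := by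
  obtain ⟨B, hB⟩ := hg
  have hnB : {t | t ∉ B} ∈ 𝓝[>] a := by
    have hclosed : IsClosed ((B.erase a : Finset ℝ) : Set ℝ) := (B.erase a).finite_toSet.isClosed
    filter_upwards [nhdsWithin_le_nhds (hclosed.compl_mem_nhds (by simp)), self_mem_nhdsWithin]
      with t ht hat
    exact fun htB => hat.ne' (by simpa [htB] using ht)
  obtain ⟨c, hac, hsub⟩ := mem_nhdsGT_iff_exists_Ioo_subset.mp hnB
  refine ⟨c, hac, exists_affine_of_locally_affine isOpen_Ioo isPreconnected_Ioo
    fun t ht => ?_⟩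
  obtain ⟨m, b, ε, hε, hmb⟩ := hB t (hsub ht)
  exact ⟨m, b, Metric.eventually_nhds_iff.mpr ⟨ε, hε, fun u hu => hmb u hu⟩⟩

namespace PLo

variable {f : Perm ℝ}

theorem continuous {I : Set ℝ} (hf : f ∈ PLo I) : Continuous f :=
  hf.1.monotone.continuous_of_surjective f.surjective

theorem apply_of_nonpos (hf : f ∈ PLo (Ici 0)) {t : ℝ} (ht : t ≤ 0) : f t = t := by
  have hfix : Iio 0 ⊆ {t | f t = t} := fun t ht => by
    by_contra hmoved
    exact absurd (mem_Ici.mp (hf.2.2 hmoved)) (not_le.mpr ht)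
  have hclosed : IsClosed {t | f t = t} := isClosed_eq (PLo.continuous hf) continuous_id
  exact hclosed.closure_subset_iff.mpr hfix (by rwa [closure_Iio])

theorem apply_pos (hf : f ∈ PLo (Ici 0)) {t : ℝ} (ht : 0 < t) : 0 < f t :=
  apply_of_nonpos hf le_rfl ▸ hf.1 ht

theorem exists_eq_mul_near_zero (hf : f ∈ PLo (Ici 0)) :
    ∃ m, 0 < m ∧ ∃ δ, 0 < δ ∧ ∀ t ∈ Ico 0 δ, f t = m * t := by
  obtain ⟨δ, hδ, m, b, hmb⟩ := hf.2.1.exists_affine_Ioo 0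
  have hf0 : f 0 = 0 := apply_of_nonpos hf le_rfl
  have hb : b = 0 := by
    have hlin : Tendsto (fun t : ℝ => m * t + b) (𝓝[>] 0) (𝓝 (m * 0 + b)) :=
      ((by fun_prop : Continuous fun t : ℝ => m * t + b).tendsto 0).mono_left nhdsWithin_le_nhds
    have hlim : Tendsto f (𝓝[>] 0) (𝓝 (m * 0 + b)) :=
      hlin.congr' (eventually_of_mem (Ioo_mem_nhdsGT hδ) fun t ht => (hmb t ht).symm)
    have hlim0 : Tendsto f (𝓝[>] 0) (𝓝 (f 0)) :=
      ((PLo.continuous hf).tendsto 0).mono_left nhdsWithin_le_nhds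
    simpa [hf0] using tendsto_nhds_unique hlim hlim0
  subst hb
  have hm : 0 < m := by
    have := apply_pos hf (half_pos hδ)
    rw [hmb _ ⟨half_pos hδ, half_lt_self hδ⟩, add_zero] at this
    exact pos_of_mul_pos_left this (half_pos hδ).le
  refine ⟨m, hm, δ, hδ, fun t ⟨ht0, htδ⟩ => ?_⟩
  rcases ht0.eq_or_lt with rfl | ht0
  · rw [hf0, mul_zero]
  · simpa using hmb t ⟨ht0, htδ⟩

end PLo

theorem rightSlope_eq_of_eqOn_Ico {g : ℝ → ℝ} {m δ : ℝ} (hδ : 0 < δ)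
    (h : ∀ t ∈ Ico 0 δ, g t = m * t) : rightSlope g 0 = m := by
  have hlin : HasDerivWithinAt (fun t => m * t) m (Ici 0) 0 := by
    simpa using ((hasDerivAt_id (0 : ℝ)).const_mul m).hasDerivWithinAt
  have hev : g =ᶠ[𝓝[Ici 0] 0] fun t => m * t :=
    eventually_of_mem (Ico_mem_nhdsGE hδ) h
  exact (hlin.congr_of_eventuallyEq hev (by simpa using h 0 ⟨le_rfl, hδ⟩)).derivWithin
    (uniqueDiffOn_Ici 0 0 self_mem_Ici)

section Orbit

variable {G : Subgroup (Perm ℝ)}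

theorem smul_csSup_orbit (hmono : ∀ g ∈ G, StrictMono g) {t : ℝ}
    (hbdd : BddAbove (MulAction.orbit G t)) (g : G) :
    g • sSup (MulAction.orbit G t) = sSup (MulAction.orbit G t) := by
  let e := StrictMono.orderIsoOfSurjective _ (hmono g g.2) (g : Perm ℝ).surjective
  have himage : e '' MulAction.orbit G t = MulAction.orbit G t := by
    show (fun x => g • x) '' _ = _
    rw [Set.image_smul, MulAction.smul_orbit]
  calc g • sSup (MulAction.orbit G t) = e (sSup (MulAction.orbit G t)) := rfl
    _ = sSup (MulAction.orbit G t) := by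
      rw [e.map_csSup' (MulAction.nonempty_orbit t) hbdd, himage]

theorem smul_csInf_orbit (hmono : ∀ g ∈ G, StrictMono g) {t : ℝ}
    (hbdd : BddBelow (MulAction.orbit G t)) (g : G) :
    g • sInf (MulAction.orbit G t) = sInf (MulAction.orbit G t) := by
  let e := StrictMono.orderIsoOfSurjective _ (hmono g g.2) (g : Perm ℝ).surjective
  have himage : e '' MulAction.orbit G t = MulAction.orbit G t := by
    show (fun x => g • x) '' _ = _
    rw [Set.image_smul, MulAction.smul_orbit]
  calc g • sInf (MulAction.orbit G t) = e (sInf (MulAction.orbit G t)) := rfl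
    _ = sInf (MulAction.orbit G t) := by
      rw [e.map_csInf' (MulAction.nonempty_orbit t) hbdd, himage]

variable (hmono : ∀ g ∈ G, StrictMono g) (hirr : ∀ t : ℝ, 0 < t → ∃ g ∈ G, g t ≠ t)
include hmono hirr

theorem exists_apply_lt (t : ℝ) {ε : ℝ} (hε : 0 < ε) : ∃ u : G, (u : Perm ℝ) t < ε := by
  by_contra! hge
  have hbdd : ∀ s ∈ MulAction.orbit G t, ε ≤ s := by
    rintro _ ⟨u, rfl⟩
    exact hge u
  have hc : ε ≤ sInf (MulAction.orbit G t) := le_csInf (MulAction.nonempty_orbit t) hbdd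
  obtain ⟨g, hg, hmoved⟩ := hirr _ (hε.trans_le hc)
  exact hmoved (smul_csInf_orbit hmono ⟨ε, hbdd⟩ ⟨g, hg⟩)

theorem exists_le_apply {t : ℝ} (ht : 0 < t) (Θ : ℝ) : ∃ u : G, Θ ≤ (u : Perm ℝ) t := by
  by_contra! hlt
  have hbdd : ∀ s ∈ MulAction.orbit G t, s ≤ Θ := by
    rintro _ ⟨u, rfl⟩
    exact (hlt u).le
  have hc : t ≤ sSup (MulAction.orbit G t) :=
    le_csSup ⟨Θ, hbdd⟩ (MulAction.mem_orbit_self t)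
  obtain ⟨g, hg, hmoved⟩ := hirr _ (ht.trans_le hc)
  exact hmoved (smul_csSup_orbit hmono ⟨Θ, hbdd⟩ ⟨g, hg⟩)

end Orbit

theorem exists_mem_commutator_apply_ne {G : Subgroup (Perm ℝ)}
    (hfix : ∀ g ∈ G, ∀ t : ℝ, t ≤ 0 → g t = t) (hna : ∃ g ∈ G, ∃ h ∈ G, g * h ≠ h * g)
    {S : Set ℝ} (hS : ∀ t : ℝ, 0 < t → ∃ u : G, (u : Perm ℝ) t ∈ S) :
    ∃ h ∈ commutator G, ∃ s ∈ S, (h : Perm ℝ) s ≠ s := by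
  obtain ⟨p, hp, q, hq, hpq⟩ := hna
  set b : G := ⁅(⟨p, hp⟩ : G), ⟨q, hq⟩⁆
  have hb : b ≠ 1 := fun h =>
    hpq (congrArg Subtype.val (commutatorElement_eq_one_iff_mul_comm.mp h))
  obtain ⟨t, ht⟩ : ∃ t, (b : Perm ℝ) t ≠ t := by
    by_contra! h
    exact hb (Subtype.ext (Equiv.ext h))
  have ht0 : 0 < t := by
    by_contra! ht0
    exact ht (hfix _ b.2 t ht0)
  obtain ⟨u, hu⟩ := hS t ht0
  have hb_mem : b ∈ commutator G := by
    rw [commutator_def]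
    exact Subgroup.commutator_mem_commutator (Subgroup.mem_top _) (Subgroup.mem_top _)
  refine ⟨u * b * u⁻¹, Subgroup.Normal.conj_mem inferInstance b hb_mem u, _, hu, ?_⟩
  intro hfixed
  apply ht
  apply (u : Perm ℝ).injective
  simpa [Perm.mul_apply] using hfixed

theorem amplTop_eq_of_eventually_eq {g : ℝ → ℝ} {τ k : ℝ} (h : ∀ t, k ≤ t → g t = t + τ) :
    amplTop g = τ := by
  refine Tendsto.limUnder_eq (tendsto_const_nhds.congr' ?_)
  filter_upwards [eventually_ge_atTop k] with t ht
  rw [h t ht, add_sub_cancel_left]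

section Translations

variable {G : Subgroup (Perm ℝ)} (htrans : ∀ g ∈ G, ∃ τ k : ℝ, ∀ t : ℝ, k ≤ t → g t = t + τ)
include htrans

theorem eventually_eq_add_amplTop (g : G) :
    ∃ k, ∀ t, k ≤ t → (g : Perm ℝ) t = t + amplTop (g : Perm ℝ) := by
  obtain ⟨τ, k, h⟩ := htrans g g.2
  exact ⟨k, by rwa [amplTop_eq_of_eventually_eq h]⟩

theorem isChar_neg_amplTop : IsChar fun g : G => -amplTop (g : Perm ℝ) := by
  intro g h
  obtain ⟨kg, hg⟩ := eventually_eq_add_amplTop htrans g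
  obtain ⟨kh, hh⟩ := eventually_eq_add_amplTop htrans h
  have hgh : ∀ t, max kh (kg - amplTop (h : Perm ℝ)) ≤ t → ((g * h : G) : Perm ℝ) t =
      t + (amplTop (g : Perm ℝ) + amplTop (h : Perm ℝ)) := by
    intro t ht
    rw [max_le_iff] at ht
    show (g : Perm ℝ) ((h : Perm ℝ) t) = _
    rw [hh t ht.1, hg _ (by linarith)]
    ring
  simp only [amplTop_eq_of_eventually_eq hgh]
  ring

theorem not_memSigma1_neg_amplTop (hfix : ∀ g ∈ G, ∀ t : ℝ, t ≤ 0 → g t = t)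
    (hmono : ∀ g ∈ G, StrictMono g) (hna : ∃ g ∈ G, ∃ h ∈ G, g * h ≠ h * g)
    (hirr : ∀ t : ℝ, 0 < t → ∃ g ∈ G, g t ≠ t)
    (hex : ∃ g : G, amplTop (g : Perm ℝ) ≠ 0) :
    ¬ MemSigma1 fun g : G => -amplTop (g : Perm ℝ) := by
  have hψ := isChar_neg_amplTop htrans
  refine not_memSigma1_of_eventually_translation (f := MulAction.toEndHom) hψ
    (by simpa using hex) (fun g => ?_) (fun Θ => ?_)
  · obtain ⟨k, hk⟩ := eventually_eq_add_amplTop htrans g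
    exact ⟨k, fun u hu => by rw [sub_neg_eq_add]; exact hk u hu⟩
  · obtain ⟨h, hh, s, hs, hmoved⟩ := exists_mem_commutator_apply_ne hfix hna (S := Ici Θ)
      fun t ht => exists_le_apply hmono hirr ht Θ
    exact ⟨h, hψ.map_eq_zero_of_mem_commutator hh, s, hs, hmoved⟩

end Translations

section LeftEnd

variable {G : Subgroup (Perm ℝ)}

theorem chiL_eq_log_of_eqOn_Ico (g : G) {m δ : ℝ} (hδ : 0 < δ)
    (h : ∀ t ∈ Ico 0 δ, (g : Perm ℝ) t = m * t) : chiL G 0 g = Real.log m := by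
  rw [chiL, rightSlope_eq_of_eqOn_Ico hδ h]

theorem exists_eqOn_Ico_exp_chiL_mul (hG : (G : Set (Perm ℝ)) ⊆ PLo (Ici 0)) (g : G) :
    ∃ δ, 0 < δ ∧ ∀ t ∈ Ico 0 δ, (g : Perm ℝ) t = Real.exp (chiL G 0 g) * t := by
  obtain ⟨m, hm, δ, hδ, h⟩ := PLo.exists_eq_mul_near_zero (hG g.2)
  rw [chiL_eq_log_of_eqOn_Ico g hδ h, Real.exp_log hm]
  exact ⟨δ, hδ, h⟩

theorem isChar_chiL (hG : (G : Set (Perm ℝ)) ⊆ PLo (Ici 0)) : IsChar (chiL G 0) := by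
  intro g h
  obtain ⟨δg, hδg, hg⟩ := exists_eqOn_Ico_exp_chiL_mul hG g
  obtain ⟨δh, hδh, hh⟩ := exists_eqOn_Ico_exp_chiL_mul hG h
  set δ := min δh (δg / Real.exp (chiL G 0 h))
  have hδ : 0 < δ := lt_min hδh (by positivity)
  have hgh : ∀ t ∈ Ico 0 δ,
      ((g * h : G) : Perm ℝ) t = Real.exp (chiL G 0 g + chiL G 0 h) * t := by
    rintro t ⟨ht0, htδ⟩
    have hht : Real.exp (chiL G 0 h) * t < δg := by
      have := htδ.trans_le (min_le_right _ _)
      rwa [lt_div_iff₀ (Real.exp_pos _), mul_comm] at this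
    show (g : Perm ℝ) ((h : Perm ℝ) t) = _
    rw [hh t ⟨ht0, htδ.trans_le (min_le_left _ _)⟩, hg _ ⟨by positivity, hht⟩, Real.exp_add,
      mul_assoc]
  rw [chiL_eq_log_of_eqOn_Ico _ hδ hgh, Real.log_exp]

/-- The coordinate `u = -log t` moves the end `0` to `+∞` and turns the germ
`t ↦ exp (χ_ℓ g) * t` into the translation by `-χ_ℓ g`. -/
noncomputable def logCoordHom (hpos : ∀ g ∈ G, ∀ t : ℝ, 0 < t → 0 < g t) :
    G →* Function.End ℝ where
  toFun g u := -Real.log ((g : Perm ℝ) (Real.exp (-u)))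
  map_one' := by
    funext u
    simp only [OneMemClass.coe_one, Perm.one_apply, Real.log_exp, neg_neg]
    rfl
  map_mul' g h := by
    funext u
    show _ = -Real.log ((g : Perm ℝ) (Real.exp (-(-Real.log ((h : Perm ℝ) (Real.exp (-u)))))))
    rw [neg_neg, Real.exp_log (hpos h h.2 _ (Real.exp_pos _))]
    rfl

theorem not_memSigma1_chiL (hG : (G : Set (Perm ℝ)) ⊆ PLo (Ici 0))
    (hna : ∃ g ∈ G, ∃ h ∈ G, g * h ≠ h * g) (hirr : ∀ t : ℝ, 0 < t → ∃ g ∈ G, g t ≠ t)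
    (hex : ∃ g : G, chiL G 0 g ≠ 0) : ¬ MemSigma1 (chiL G 0) := by
  have hpos : ∀ g ∈ G, ∀ t : ℝ, 0 < t → 0 < g t := fun g hg _ => PLo.apply_pos (hG hg)
  refine not_memSigma1_of_eventually_translation (f := logCoordHom hpos) (isChar_chiL hG) hex
    (fun g => ?_) (fun Θ => ?_)
  · obtain ⟨δ, hδ, hg⟩ := exists_eqOn_Ico_exp_chiL_mul hG g
    refine ⟨1 - Real.log δ, fun u hu => ?_⟩
    have hsmall : Real.exp (-u) < δ := by
      rw [← Real.lt_log_iff_exp_lt hδ]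
      linarith
    show -Real.log ((g : Perm ℝ) (Real.exp (-u))) = _
    rw [hg _ ⟨(Real.exp_pos _).le, hsmall⟩, ← Real.exp_add, Real.log_exp]
    ring
  · obtain ⟨h, hh, s, ⟨hs0, hsΘ⟩, hmoved⟩ :=
      exists_mem_commutator_apply_ne (S := Ioo 0 (Real.exp (-Θ)))
        (fun g hg _ => PLo.apply_of_nonpos (hG hg)) hna fun t ht =>
          let ⟨u, hu⟩ := exists_apply_lt (fun g hg => (hG hg).1) hirr t (Real.exp_pos (-Θ))
          ⟨u, PLo.apply_pos (hG u.2) ht, hu⟩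
    refine ⟨h, (isChar_chiL hG).map_eq_zero_of_mem_commutator hh, -Real.log s, ?_, ?_⟩
    · rw [le_neg, Real.log_le_iff_le_exp hs0]
      exact hsΘ.le
    · show -Real.log ((h : Perm ℝ) (Real.exp (- -Real.log s))) ≠ -Real.log s
      rw [neg_neg, Real.exp_log hs0, neg_inj.ne]
      exact fun heq => hmoved (Real.log_injOn_pos (hpos _ h.2 s hs0) hs0 heq)

end LeftEnd

/-- **Proposition (Statement 16).** Let `G ≤ PL_o([0,∞[)` be non-abelian and
irreducible, with every element of `im ρ` a translation, and let `τ_r` send `g` to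
the amplitude of `ρ(g)`. If `χ_ℓ` is non-zero then `[χ_ℓ] ∉ Σ¹(G)`; if `τ_r` is
non-zero then `[−τ_r] ∉ Σ¹(G)`. -/
theorem chiL_negTauR_not_memSigma1_half_line
    (G : Subgroup (Equiv.Perm ℝ)) (hG : (G : Set (Equiv.Perm ℝ)) ⊆ PLo (Ici (0 : ℝ)))
    (hna : ∃ g ∈ G, ∃ h ∈ G, g * h ≠ h * g)
    (hirr : ∀ t : ℝ, 0 < t → ∃ g ∈ G, g t ≠ t)
    (htrans : ∀ g ∈ G, ∃ τ k : ℝ, ∀ t : ℝ, k ≤ t → g t = t + τ) :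
    ((∃ g : G, chiL G 0 g ≠ 0) → ¬ MemSigma1 (chiL G 0)) ∧
    ((∃ g : G, amplTop (⇑(g : Equiv.Perm ℝ)) ≠ 0) →
      ¬ MemSigma1 (fun g : G => -amplTop (⇑(g : Equiv.Perm ℝ)))) :=
  ⟨not_memSigma1_chiL hG hna hirr,
    not_memSigma1_neg_amplTop htrans (fun _ hg _ => PLo.apply_of_nonpos (hG hg))
      (fun _ hg => (hG hg).1) hna hirr⟩
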